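/- Let w ∈ A₂ on ℝ. Then for every dyadic interval I: Σ_{J⊆I} (⟨w^{-1/2}, h_J⟩)² ⟨w⟩_{πJ} ≲ [w]²_{A₂} |I|, where πJ is the dyadic parent of J. -/

import Mathlib

open MeasureTheory Set
open scoped ENNReal

noncomputable section

/-- The dyadic interval `[k·2^n, (k+1)·2^n)` encoded by the pair `p = (n, k)`. -/
def dyad (p : ℤ × ℤ) : Set ℝ := Set.Ico ((p.2 : ℝ) * 2 ^ p.1) (((p.2 : ℝ) + 1) * 2 ^ p.1)

/-- Left half of a dyadic interval. -/
def dLeft (p : ℤ × ℤ) : ℤ × ℤ := (p.1 - 1, 2 * p.2)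

/-- Right half of a dyadic interval. -/
def dRight (p : ℤ × ℤ) : ℤ × ℤ := (p.1 - 1, 2 * p.2 + 1)

/-- Dyadic parent. -/
def dParent (p : ℤ × ℤ) : ℤ × ℤ := (p.1 + 1, Int.fdiv p.2 2)

/-- Length of the dyadic interval. -/
def dLen (p : ℤ × ℤ) : ℝ := 2 ^ p.1

/-- The L²-normalized Haar function `h_I = |I|^{-1/2}(1_{I₋} - 1_{I₊})`. -/
def haarF (p : ℤ × ℤ) : ℝ → ℝ := fun x =>
  (Real.sqrt (dLen p))⁻¹ *
    ((dyad (dLeft p)).indicator (fun _ => (1 : ℝ)) x -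
      (dyad (dRight p)).indicator (fun _ => (1 : ℝ)) x)

/-- The averaging function `h_I^1 = |I|^{-1} 1_I`. -/
def haarAvg (p : ℤ × ℤ) : ℝ → ℝ := fun x =>
  (dLen p)⁻¹ * (dyad p).indicator (fun _ => (1 : ℝ)) x

/-- Haar coefficient `⟨f, h_I⟩`. -/
def hc (f : ℝ → ℝ) (p : ℤ × ℤ) : ℝ := ∫ x, f x * haarF p x

/-- Average `⟨f⟩_I = |I|⁻¹ ∫_I f`. -/
def avg (f : ℝ → ℝ) (p : ℤ × ℤ) : ℝ := (dLen p)⁻¹ * ∫ x in dyad p, f x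

open Classical in
/-- `δ(J, I) = 1` if `J ⊆ I₋` and `-1` otherwise (in particular if `J ⊆ I₊`). -/
def dsgn (q p : ℤ × ℤ) : ℝ := if dyad q ⊆ dyad (dLeft p) then 1 else -1

/-- `𝔰(J) = √2 · Σ_{K : K₋ ⊋ J} |K|⁻¹`. -/
def sfrak (p : ℤ × ℤ) : ℝ :=
  Real.sqrt 2 * ∑' q : {q : ℤ × ℤ // dyad p ⊂ dyad (dLeft q)}, (dLen q.1)⁻¹

/-!
Write `f = w^{-1/2}`, `w(K) = ∫_K w` and `A` for the `A₂` constant. Bessel's inequality for the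
Haar system gives `∑_{J ⊆ K} ⟨f, h_J⟩² ≤ ∫_K f² = ∫_K w⁻¹ ≤ A |K|² / w(K)`. Cauchy–Schwarz gives
`|J|² ≤ w(J) ∫_J w⁻¹`, so an `A₂` weight is doubling: `⟨w⟩_{πJ} ≤ 2A ⟨w⟩_J`. It then suffices to
show `∑_{J ⊆ K} a_J ⟨w⟩_J ≤ 4A |K|` for any `a ≥ 0` satisfying the Bessel-type bound
`∑_{J ⊆ K} a_J ≤ A |K|² / w(K)` on every `K`. This is a stopping-time argument at height
`τ = ⟨w⟩_K`: intervals with `⟨w⟩_J ≤ 2τ` contribute at most `2τ ∑ a_J ≤ 2A|K|`, and the maximal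
intervals `J` with `⟨w⟩_J > 2τ` are disjoint, have total `w`-mass at most `w(K)`, and each
carries at most `4A|J| < 2A w(J) / τ` by induction.
-/

theorem dLen_pos (p : ℤ × ℤ) : 0 < dLen p := zpow_pos two_pos _

theorem dLen_dLeft (p : ℤ × ℤ) : dLen (dLeft p) = dLen p / 2 :=
  zpow_sub_one₀ two_ne_zero p.1

theorem dLen_dRight (p : ℤ × ℤ) : dLen (dRight p) = dLen p / 2 := dLen_dLeft p

theorem dLen_dParent (p : ℤ × ℤ) : dLen (dParent p) = 2 * dLen p :=
  (zpow_add_one₀ two_ne_zero p.1).trans (mul_comm _ _)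

theorem left_mem_dyad (p : ℤ × ℤ) : (p.2 : ℝ) * 2 ^ p.1 ∈ dyad p :=
  left_mem_Ico.2 (by linarith [dLen_pos p, show dLen p = 2 ^ p.1 from rfl])

theorem measurableSet_dyad (p : ℤ × ℤ) : MeasurableSet (dyad p) := measurableSet_Ico

theorem volume_dyad (p : ℤ × ℤ) : volume (dyad p) = ENNReal.ofReal (dLen p) := by
  rw [dyad, Real.volume_Ico, dLen]
  ring_nf

theorem measureReal_dyad (p : ℤ × ℤ) : volume.real (dyad p) = dLen p := by
  rw [measureReal_def, volume_dyad, ENNReal.toReal_ofReal (dLen_pos p).le]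

instance isFiniteMeasure_restrict_dyad (p : ℤ × ℤ) : IsFiniteMeasure (volume.restrict (dyad p)) :=
  isFiniteMeasure_restrict.2 (by simp [volume_dyad])

theorem dyad_subset_dyad_iff {q p : ℤ × ℤ} (e : ℕ) (he : q.1 + e = p.1) :
    dyad q ⊆ dyad p ↔ p.2 * 2 ^ e ≤ q.2 ∧ q.2 + 1 ≤ (p.2 + 1) * 2 ^ e := by
  have hq : (0 : ℝ) < 2 ^ q.1 := zpow_pos two_pos _
  have hp : (2 : ℝ) ^ p.1 = 2 ^ e * 2 ^ q.1 := by
    rw [← he, zpow_add₀ two_ne_zero, zpow_natCast, mul_comm]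
  rw [dyad, dyad, Ico_subset_Ico_iff (nonempty_Ico.1 ⟨_, left_mem_dyad q⟩), hp, ← mul_assoc,
    ← mul_assoc, mul_le_mul_iff_of_pos_right hq, mul_le_mul_iff_of_pos_right hq]
  norm_cast

theorem dyad_subset_dyad_dParent (p : ℤ × ℤ) : dyad p ⊆ dyad (dParent p) := by
  rw [dyad_subset_dyad_iff 1 rfl, dParent, Int.fdiv_eq_ediv_of_nonneg _ zero_le_two]
  omega

theorem dyad_dLeft_union_dRight (p : ℤ × ℤ) : dyad (dLeft p) ∪ dyad (dRight p) = dyad p := by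
  have h : (2 : ℝ) ^ p.1 = 2 * 2 ^ (p.1 - 1) := by
    rw [← zpow_one_add₀ two_ne_zero]; ring_nf
  have hpos : (0 : ℝ) < 2 ^ (p.1 - 1) := zpow_pos two_pos _
  simp only [dyad, dLeft, dRight, h]
  push_cast
  rw [Ico_union_Ico_eq_Ico (by linarith) (by linarith)]
  congr 1 <;> ring

theorem disjoint_dyad_dLeft_dRight (p : ℤ × ℤ) : Disjoint (dyad (dLeft p)) (dyad (dRight p)) := by
  simp only [dyad, dLeft, dRight]
  push_cast
  exact Ico_disjoint_Ico_same

theorem dyad_dLeft_subset (p : ℤ × ℤ) : dyad (dLeft p) ⊆ dyad p :=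
  dyad_dLeft_union_dRight p ▸ subset_union_left

theorem dyad_dRight_subset (p : ℤ × ℤ) : dyad (dRight p) ⊆ dyad p :=
  dyad_dLeft_union_dRight p ▸ subset_union_right

theorem fst_le_of_dyad_subset {q p : ℤ × ℤ} (h : dyad q ⊆ dyad p) : q.1 ≤ p.1 := by
  have hlen : dLen q ≤ dLen p := by
    simpa only [measureReal_dyad] using measureReal_mono (μ := volume) h (by simp [volume_dyad])
  exact (zpow_le_zpow_iff_right₀ one_lt_two).1 hlen

/-- The first `n` generations of dyadic subintervals of `K` (empty for `n = 0`). -/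
def dyadicTree : ℕ → ℤ × ℤ → Finset (ℤ × ℤ)
  | 0, _ => ∅
  | n + 1, K => insert K (dyadicTree n (dLeft K) ∪ dyadicTree n (dRight K))

theorem dyad_subset_of_mem_dyadicTree {n : ℕ} {J K : ℤ × ℤ} (h : J ∈ dyadicTree n K) :
    dyad J ⊆ dyad K := by
  induction n generalizing K with
  | zero => simp [dyadicTree] at h
  | succ n ih =>
    simp only [dyadicTree, Finset.mem_insert, Finset.mem_union] at h
    rcases h with rfl | hL | hR
    · exact subset_rfl
    · exact (ih hL).trans (dyad_dLeft_subset K)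
    · exact (ih hR).trans (dyad_dRight_subset K)

theorem dyadicTree_mono {m n : ℕ} (h : m ≤ n) (K : ℤ × ℤ) : dyadicTree m K ⊆ dyadicTree n K := by
  induction m generalizing n K with
  | zero => simp [dyadicTree]
  | succ m ih =>
    obtain ⟨n, rfl⟩ := Nat.exists_eq_add_of_le' (Nat.one_le_of_lt h)
    exact Finset.insert_subset_insert _
      (Finset.union_subset_union (ih (by omega) _) (ih (by omega) _))

theorem sum_dyadicTree_succ {M : Type*} [AddCommMonoid M] (f : ℤ × ℤ → M) (n : ℕ) (K : ℤ × ℤ) :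
    ∑ J ∈ dyadicTree (n + 1) K, f J =
      f K + ∑ J ∈ dyadicTree n (dLeft K), f J + ∑ J ∈ dyadicTree n (dRight K), f J := by
  have hK : ∀ K', K'.1 < K.1 → K ∉ dyadicTree n K' := fun K' hK' hK =>
    (fst_le_of_dyad_subset (dyad_subset_of_mem_dyadicTree hK)).not_gt hK'
  have hLR : Disjoint (dyadicTree n (dLeft K)) (dyadicTree n (dRight K)) :=
    Finset.disjoint_left.2 fun J hL hR =>
      (disjoint_dyad_dLeft_dRight K).ne_of_mem
        (dyad_subset_of_mem_dyadicTree hL (left_mem_dyad J))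
        (dyad_subset_of_mem_dyadicTree hR (left_mem_dyad J)) rfl
  rw [dyadicTree, Finset.sum_insert, Finset.sum_union hLR, add_assoc]
  simp only [Finset.mem_union, not_or]
  exact ⟨hK _ (by simp [dLeft]), hK _ (by simp [dRight])⟩

theorem mem_dyadicTree_of_dyad_subset {q p : ℤ × ℤ} (e : ℕ) (he : q.1 + e = p.1)
    (h : dyad q ⊆ dyad p) : q ∈ dyadicTree (e + 1) p := by
  induction e generalizing p with
  | zero =>
    obtain ⟨h₁, h₂⟩ := (dyad_subset_dyad_iff 0 he).1 h
    simp only [pow_zero, mul_one] at h₁ h₂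
    have : q = p := Prod.ext (by simpa using he) (by omega)
    simp [dyadicTree, this]
  | succ e ih =>
    have he' : q.1 + e = p.1 - 1 := by omega
    obtain ⟨h₁, h₂⟩ := (dyad_subset_dyad_iff (e + 1) he).1 h
    rw [pow_succ] at h₁ h₂
    rw [dyadicTree, Finset.mem_insert, Finset.mem_union]
    rcases le_or_gt ((2 * p.2 + 1) * 2 ^ e) q.2 with hq | hq
    · refine .inr (.inr (ih he' ((dyad_subset_dyad_iff e he').2 ⟨hq, ?_⟩)))
      simp only [dRight]; linarith
    · refine .inr (.inl (ih he' ((dyad_subset_dyad_iff e he').2 ⟨?_, ?_⟩)))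
      · simp only [dLeft]; linarith
      · simp only [dLeft]; linarith

theorem exists_subset_dyadicTree {p : ℤ × ℤ} {F : Finset (ℤ × ℤ)}
    (hF : ∀ q ∈ F, dyad q ⊆ dyad p) : ∃ N, F ⊆ dyadicTree N p := by
  refine ⟨F.sup fun q => (p.1 - q.1).toNat + 1, ?_⟩
  intro q hq
  have hle : q.1 ≤ p.1 := fst_le_of_dyad_subset (hF q hq)
  have hmem : q ∈ dyadicTree ((p.1 - q.1).toNat + 1) p :=
    mem_dyadicTree_of_dyad_subset _ (by omega) (hF q hq)
  have hN : (p.1 - q.1).toNat + 1 ≤ F.sup fun q => (p.1 - q.1).toNat + 1 :=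
    Finset.le_sup (f := fun q => (p.1 - q.1).toNat + 1) hq
  exact dyadicTree_mono hN p hmem

section Carleson

variable {a W : ℤ × ℤ → ℝ} {A : ℝ}

theorem two_mul_avg_mul_add_le {K : ℤ × ℤ} (hWK : 0 < W K) {V : ℝ}
    (hV : V ≤ A * dLen K ^ 2 / W K) :
    2 * ((dLen K)⁻¹ * W K) * V + 2 * A * W K / ((dLen K)⁻¹ * W K) ≤ 4 * A * dLen K := by
  have hK := dLen_pos K
  calc _ ≤ 2 * ((dLen K)⁻¹ * W K) * (A * dLen K ^ 2 / W K)
          + 2 * A * W K / ((dLen K)⁻¹ * W K) := by gcongr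
    _ = 4 * A * dLen K := by field_simp; ring

variable (ha : ∀ J, 0 ≤ a J) (hW : ∀ J, 0 < W J)
  (hW_add : ∀ J, W J = W (dLeft J) + W (dRight J)) (hA : 0 ≤ A)
  (hbessel : ∀ N K, ∑ J ∈ dyadicTree N K, a J ≤ A * dLen K ^ 2 / W K)
include ha hW hW_add hA hbessel

theorem sum_dyadicTree_mul_avg_le_stopping (N : ℕ) (K : ℤ × ℤ) {τ : ℝ} (hτ : 0 < τ) :
    ∑ J ∈ dyadicTree N K, a J * ((dLen J)⁻¹ * W J) ≤
      2 * τ * ∑ J ∈ dyadicTree N K, a J + 2 * A * W K / τ := by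
  induction N generalizing K τ with
  | zero =>
    have := hW K
    simp only [dyadicTree, Finset.sum_empty, mul_zero, zero_add]
    positivity
  | succ N ih =>
    have below : ∀ τ, 0 < τ → (dLen K)⁻¹ * W K ≤ 2 * τ →
        ∑ J ∈ dyadicTree (N + 1) K, a J * ((dLen J)⁻¹ * W J) ≤
          2 * τ * ∑ J ∈ dyadicTree (N + 1) K, a J + 2 * A * W K / τ := by
      intro τ hτ hz
      have hroot : a K * ((dLen K)⁻¹ * W K) ≤ 2 * τ * a K := by
        rw [mul_comm (2 * τ)]; exact mul_le_mul_of_nonneg_left hz (ha K)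
      have hL := ih (dLeft K) hτ
      have hR := ih (dRight K) hτ
      have hsplit : 2 * A * W K / τ = 2 * A * W (dLeft K) / τ + 2 * A * W (dRight K) / τ := by
        rw [hW_add K]; ring
      rw [sum_dyadicTree_succ, sum_dyadicTree_succ, hsplit]
      linarith
    rcases le_or_gt ((dLen K)⁻¹ * W K) (2 * τ) with hz | hz
    · exact below τ hτ hz
    · have hz0 : 0 < (dLen K)⁻¹ * W K := by have := hW K; have := dLen_pos K; positivity
      have hWτ : 2 * τ * dLen K ≤ W K := by
        have := dLen_pos K
        rw [inv_mul_eq_div, lt_div_iff₀ this] at hz; linarith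
      calc _ ≤ 4 * A * dLen K :=
            (below _ hz0 (by linarith)).trans (two_mul_avg_mul_add_le (hW K) (hbessel _ K))
        _ ≤ 2 * A * W K / τ := by
            rw [le_div_iff₀ hτ]; nlinarith
        _ ≤ _ := le_add_of_nonneg_left (by
            have := Finset.sum_nonneg fun J (_ : J ∈ dyadicTree (N + 1) K) => ha J
            positivity)

theorem sum_dyadicTree_mul_avg_le (N : ℕ) (K : ℤ × ℤ) :
    ∑ J ∈ dyadicTree N K, a J * ((dLen J)⁻¹ * W J) ≤ 4 * A * dLen K := by
  have hz0 : 0 < (dLen K)⁻¹ * W K := by have := hW K; have := dLen_pos K; positivity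
  exact (sum_dyadicTree_mul_avg_le_stopping ha hW hW_add hA hbessel N K hz0).trans
    (two_mul_avg_mul_add_le (hW K) (hbessel N K))

end Carleson

theorem sq_integral_mul_le {α : Type*} [MeasurableSpace α] {μ : Measure α} {f g : α → ℝ}
    (hf : Integrable (fun x => f x ^ 2) μ) (hg : Integrable (fun x => g x ^ 2) μ)
    (hfg : Integrable (fun x => f x * g x) μ) :
    (∫ x, f x * g x ∂μ) ^ 2 ≤ (∫ x, f x ^ 2 ∂μ) * ∫ x, g x ^ 2 ∂μ := by
  have hquad : ∀ t : ℝ,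
      0 ≤ (∫ x, g x ^ 2 ∂μ) * (t * t) + (-2 * ∫ x, f x * g x ∂μ) * t + ∫ x, f x ^ 2 ∂μ := by
    intro t
    have hexp : (fun x => (t * g x - f x) ^ 2) =
        fun x => t ^ 2 * g x ^ 2 - 2 * t * (f x * g x) + f x ^ 2 := by
      funext x; ring
    have hnonneg :=
      integral_nonneg (μ := μ) (f := fun x => (t * g x - f x) ^ 2) fun x => sq_nonneg _
    have hint : Integrable (fun x => t ^ 2 * g x ^ 2 - 2 * t * (f x * g x)) μ :=
      (hg.const_mul _).sub (hfg.const_mul _)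
    rw [hexp, integral_add hint hf,
      integral_sub (hg.const_mul _) (hfg.const_mul _), integral_const_mul,
      integral_const_mul] at hnonneg
    linarith
  have := discrim_le_zero hquad
  rw [discrim] at this
  nlinarith

theorem sq_integral_le_measureReal_mul {α : Type*} [MeasurableSpace α] {μ : Measure α}
    [IsFiniteMeasure μ] {f : α → ℝ} (hf : Integrable f μ)
    (hf2 : Integrable (fun x => f x ^ 2) μ) :
    (∫ x, f x ∂μ) ^ 2 ≤ μ.real univ * ∫ x, f x ^ 2 ∂μ := by
  simpa [mul_comm] using sq_integral_mul_le (g := fun _ => 1) hf2 (by simp)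
    (by simpa using hf)

theorem measureReal_sq_le_integral_mul_integral_inv {α : Type*} [MeasurableSpace α]
    {μ : Measure α} [IsFiniteMeasure μ] {w : α → ℝ} (hw : ∀ x, 0 < w x) (hwi : Integrable w μ)
    (hsi : Integrable (fun x => (w x)⁻¹) μ) :
    μ.real univ ^ 2 ≤ (∫ x, w x ∂μ) * ∫ x, (w x)⁻¹ ∂μ := by
  have hsq : ∀ x, √(w x) ^ 2 = w x := fun x => Real.sq_sqrt (hw x).le
  have hinv : ∀ x, (√(w x))⁻¹ ^ 2 = (w x)⁻¹ := fun x => by rw [inv_pow, hsq]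
  have hone : ∀ x, √(w x) * (√(w x))⁻¹ = 1 := fun x =>
    mul_inv_cancel₀ (Real.sqrt_pos.2 (hw x)).ne'
  simpa [hsq, hinv, hone] using sq_integral_mul_le (μ := μ) (f := fun x => √(w x))
    (g := fun x => (√(w x))⁻¹) (by simpa only [hsq] using hwi) (by simpa only [hinv] using hsi)
    (by simpa only [hone] using integrable_const (1 : ℝ))

theorem setIntegral_dyad_eq_add {f : ℝ → ℝ} {K : ℤ × ℤ} (hf : IntegrableOn f (dyad K)) :
    ∫ x in dyad K, f x = (∫ x in dyad (dLeft K), f x) + ∫ x in dyad (dRight K), f x := by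
  rw [← setIntegral_union (disjoint_dyad_dLeft_dRight K) (measurableSet_dyad _)
    (hf.mono_set (dyad_dLeft_subset K)) (hf.mono_set (dyad_dRight_subset K)),
    dyad_dLeft_union_dRight]

theorem hc_eq_inv_sqrt_mul_sub {f : ℝ → ℝ} {K : ℤ × ℤ} (hf : IntegrableOn f (dyad K)) :
    hc f K = (√(dLen K))⁻¹ * ((∫ x in dyad (dLeft K), f x) - ∫ x in dyad (dRight K), f x) := by
  have hpt : (fun x => f x * haarF K x) = fun x =>
      (√(dLen K))⁻¹ * ((dyad (dLeft K)).indicator f x - (dyad (dRight K)).indicator f x) := by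
    funext x
    simp only [haarF, indicator]
    split_ifs <;> ring
  rw [hc, hpt, integral_const_mul, integral_sub, integral_indicator (measurableSet_dyad _),
    integral_indicator (measurableSet_dyad _)]
  · exact (integrable_indicator_iff (measurableSet_dyad _)).2 (hf.mono_set (dyad_dLeft_subset K))
  · exact (integrable_indicator_iff (measurableSet_dyad _)).2 (hf.mono_set (dyad_dRight_subset K))

/-- `|K|` times the variance of `f` on `dyad K`, i.e. `∫_K (f - ⟨f⟩_K)²`. -/
def dyadicVariance (f : ℝ → ℝ) (K : ℤ × ℤ) : ℝ :=
  (∫ x in dyad K, f x ^ 2) - (∫ x in dyad K, f x) ^ 2 / dLen K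

section Bessel

variable {f : ℝ → ℝ} {K : ℤ × ℤ} (hf : IntegrableOn f (dyad K))
  (hf2 : IntegrableOn (fun x => f x ^ 2) (dyad K))
include hf hf2

theorem dyadicVariance_nonneg : 0 ≤ dyadicVariance f K := by
  have h := sq_integral_le_measureReal_mul hf hf2
  rw [measureReal_restrict_apply_univ, measureReal_dyad] at h
  rw [dyadicVariance, sub_nonneg, div_le_iff₀' (dLen_pos K)]
  exact h

theorem sq_hc_add_dyadicVariance :
    hc f K ^ 2 + dyadicVariance f (dLeft K) + dyadicVariance f (dRight K) =
      dyadicVariance f K := by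
  have hK := dLen_pos K
  rw [dyadicVariance, dyadicVariance, dyadicVariance, hc_eq_inv_sqrt_mul_sub hf,
    setIntegral_dyad_eq_add hf, setIntegral_dyad_eq_add hf2, dLen_dLeft, dLen_dRight, mul_pow, inv_pow, Real.sq_sqrt hK.le]
  field_simp
  ring

theorem sum_sq_hc_le_dyadicVariance (N : ℕ) :
    ∑ J ∈ dyadicTree N K, hc f J ^ 2 ≤ dyadicVariance f K := by
  induction N generalizing K with
  | zero => simpa [dyadicTree] using dyadicVariance_nonneg hf hf2
  | succ N ih =>
    have hL := ih (hf.mono_set (dyad_dLeft_subset K)) (hf2.mono_set (dyad_dLeft_subset K))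
    have hR := ih (hf.mono_set (dyad_dRight_subset K)) (hf2.mono_set (dyad_dRight_subset K))
    rw [sum_dyadicTree_succ, ← sq_hc_add_dyadicVariance hf hf2]
    linarith

end Bessel

theorem setIntegral_pos_of_pos {α : Type*} [MeasurableSpace α] {μ : Measure α} {s : Set α}
    {f : α → ℝ} (hs : 0 < μ s) (hf : ∀ x, 0 < f x) (hfi : IntegrableOn f s μ) :
    0 < ∫ x in s, f x ∂μ := by
  rw [setIntegral_pos_iff_support_of_nonneg_ae (ae_of_all _ fun x => (hf x).le) hfi,
    Function.support_eq_univ fun x => (hf x).ne', univ_inter]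
  exact hs

theorem MeasureTheory.LocallyIntegrable.integrableOn_dyad {f : ℝ → ℝ}
    (hf : LocallyIntegrable f volume) (p : ℤ × ℤ) : IntegrableOn f (dyad p) :=
  (hf.integrableOn_isCompact isCompact_Icc).mono_set Ico_subset_Icc_self

theorem MeasureTheory.LocallyIntegrable.sqrt {X : Type*} [TopologicalSpace X] [MeasurableSpace X]
    [SecondCountableTopology X] {μ : Measure X} [IsLocallyFiniteMeasure μ] {f : X → ℝ}
    (hf : LocallyIntegrable f μ) : LocallyIntegrable (fun x => √(f x)) μ := by
  refine ((locallyIntegrable_const 1).add hf).mono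
    (Real.continuous_sqrt.comp_aestronglyMeasurable hf.aestronglyMeasurable)
    (ae_of_all _ fun x => ?_)
  rcases le_or_gt (f x) 0 with hx | hx
  · rw [Real.sqrt_eq_zero'.2 hx, norm_zero]
    exact norm_nonneg _
  · rw [Real.norm_of_nonneg (Real.sqrt_nonneg _), Pi.add_apply, Real.norm_of_nonneg (by linarith),
      Real.sqrt_le_left (by linarith)]
    nlinarith

theorem integral_mul_integral_le_of_avg_mul_avg_le {f g : ℝ → ℝ} {p : ℤ × ℤ} {A : ℝ}
    (hA : avg f p * avg g p ≤ A) :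
    (∫ x in dyad p, f x) * (∫ x in dyad p, g x) ≤ A * dLen p ^ 2 := by
  have hp := dLen_pos p
  have havg : avg f p * avg g p = (∫ x in dyad p, f x) * (∫ x in dyad p, g x) / dLen p ^ 2 := by
    rw [avg, avg]; field_simp
  rwa [havg, div_le_iff₀ (by positivity)] at hA

section Weight

variable {w : ℝ → ℝ} (hw : ∀ x, 0 < w x) (hwi : LocallyIntegrable w volume)
  (hsi : LocallyIntegrable (fun x => (w x)⁻¹) volume)

include hw hwi in
theorem setIntegral_dyad_pos (p : ℤ × ℤ) : 0 < ∫ x in dyad p, w x :=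
  setIntegral_pos_of_pos (by simp [volume_dyad, dLen_pos]) hw (hwi.integrableOn_dyad p)

include hw hwi in
theorem avg_pos (p : ℤ × ℤ) : 0 < avg w p :=
  mul_pos (inv_pos.2 (dLen_pos p)) (setIntegral_dyad_pos hw hwi p)

include hw hwi hsi

theorem nonneg_of_avg_mul_avg_inv_le {A : ℝ} {p : ℤ × ℤ}
    (hA : avg w p * avg (fun x => (w x)⁻¹) p ≤ A) : 0 ≤ A :=
  (mul_pos (avg_pos hw hwi p) (avg_pos (fun x => inv_pos.2 (hw x)) hsi p)).le.trans hA

theorem avg_dParent_le {A : ℝ} (hA : ∀ p, avg w p * avg (fun x => (w x)⁻¹) p ≤ A) (q : ℤ × ℤ) :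
    avg w (dParent q) ≤ 2 * A * avg w q := by
  have hq := dLen_pos q
  have hWq := setIntegral_dyad_pos hw hwi q
  have hSq : 0 < ∫ x in dyad q, (w x)⁻¹ :=
    setIntegral_dyad_pos (fun x => inv_pos.2 (hw x)) hsi q
  have hcs : dLen q ^ 2 ≤ (∫ x in dyad q, w x) * ∫ x in dyad q, (w x)⁻¹ := by
    simpa [measureReal_restrict_apply_univ, measureReal_dyad] using
      measureReal_sq_le_integral_mul_integral_inv hw (hwi.integrableOn_dyad q)
        (hsi.integrableOn_dyad q)
  have hS : ∫ x in dyad q, (w x)⁻¹ ≤ ∫ x in dyad (dParent q), (w x)⁻¹ :=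
    setIntegral_mono_set (hsi.integrableOn_dyad _) (ae_of_all _ fun x => (inv_pos.2 (hw x)).le)
      (ae_of_all _ (dyad_subset_dyad_dParent q))
  have hA₂ := integral_mul_integral_le_of_avg_mul_avg_le (hA (dParent q))
  rw [dLen_dParent] at hA₂
  have hA0 := nonneg_of_avg_mul_avg_inv_le hw hwi hsi (hA q)
  have hdoubling : ∫ x in dyad (dParent q), w x ≤ 4 * A * ∫ x in dyad q, w x := by
    refine le_of_mul_le_mul_right ?_ hSq
    have hWp := setIntegral_dyad_pos hw hwi (dParent q)
    nlinarith [mul_le_mul_of_nonneg_left hS hWp.le, mul_le_mul_of_nonneg_left hcs hA0]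
  rw [avg, avg, dLen_dParent]
  calc (2 * dLen q)⁻¹ * ∫ x in dyad (dParent q), w x
      ≤ (2 * dLen q)⁻¹ * (4 * A * ∫ x in dyad q, w x) := by gcongr
    _ = 2 * A * ((dLen q)⁻¹ * ∫ x in dyad q, w x) := by field_simp; ring

theorem sum_sq_hc_inv_sqrt_le {A : ℝ} (hA : ∀ p, avg w p * avg (fun x => (w x)⁻¹) p ≤ A)
    (N : ℕ) (K : ℤ × ℤ) :
    ∑ J ∈ dyadicTree N K, hc (fun x => (√(w x))⁻¹) J ^ 2 ≤
      A * dLen K ^ 2 / ∫ x in dyad K, w x := by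
  have hsq : ∀ x, (√(w x))⁻¹ ^ 2 = (w x)⁻¹ := fun x => by rw [inv_pow, Real.sq_sqrt (hw x).le]
  have hf : LocallyIntegrable (fun x => (√(w x))⁻¹) volume := by
    simpa only [Real.sqrt_inv] using hsi.sqrt
  have hK := dLen_pos K
  calc _ ≤ dyadicVariance (fun x => (√(w x))⁻¹) K :=
        sum_sq_hc_le_dyadicVariance (hf.integrableOn_dyad K)
          (by simpa only [hsq] using hsi.integrableOn_dyad K) N
    _ ≤ ∫ x in dyad K, (√(w x))⁻¹ ^ 2 := sub_le_self _ (by positivity)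
    _ = ∫ x in dyad K, (w x)⁻¹ := by simp only [hsq]
    _ ≤ A * dLen K ^ 2 / ∫ x in dyad K, w x := by
        rw [le_div_iff₀ (setIntegral_dyad_pos hw hwi K), mul_comm]
        exact integral_mul_integral_le_of_avg_mul_avg_le (hA K)

end Weight

/-- `Σ_{J⊆I} ⟨w^{-1/2},h_J⟩² ⟨w⟩_{πJ} ≲ [w]²_{A₂} |I|`. -/
theorem statement7 :
    ∃ C : ℝ, 0 < C ∧ ∀ (w : ℝ → ℝ), (∀ x, 0 < w x) →
      LocallyIntegrable w volume → LocallyIntegrable (fun x => (w x)⁻¹) volume →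
      ∀ A : ℝ, (∀ p : ℤ × ℤ, avg w p * avg (fun x => (w x)⁻¹) p ≤ A) →
      ∀ p : ℤ × ℤ, ∀ F : Finset (ℤ × ℤ), (∀ q ∈ F, dyad q ⊆ dyad p) →
        ∑ q ∈ F, (hc (fun x => (Real.sqrt (w x))⁻¹) q) ^ 2 * avg w (dParent q) ≤
          C * A ^ 2 * dLen p := by
  refine ⟨8, by norm_num, fun w hw hwi hsi A hA p F hF => ?_⟩
  obtain ⟨N, hFN⟩ := exists_subset_dyadicTree hF
  have hA0 := nonneg_of_avg_mul_avg_inv_le hw hwi hsi (hA p)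
  have hcarleson := sum_dyadicTree_mul_avg_le (a := fun J => hc (fun x => (√(w x))⁻¹) J ^ 2)
    (W := fun J => ∫ x in dyad J, w x) (fun J => sq_nonneg _) (setIntegral_dyad_pos hw hwi)
    (fun J => setIntegral_dyad_eq_add (hwi.integrableOn_dyad J)) hA0
    (sum_sq_hc_inv_sqrt_le hw hwi hsi hA) N p
  calc ∑ q ∈ F, hc (fun x => (√(w x))⁻¹) q ^ 2 * avg w (dParent q)
      ≤ ∑ q ∈ F, 2 * A * (hc (fun x => (√(w x))⁻¹) q ^ 2 * avg w q) :=
        Finset.sum_le_sum fun q _ => (mul_le_mul_of_nonneg_left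
          (avg_dParent_le hw hwi hsi hA q) (sq_nonneg _)).trans_eq (by ring)
    _ ≤ ∑ q ∈ dyadicTree N p, 2 * A * (hc (fun x => (√(w x))⁻¹) q ^ 2 * avg w q) :=
        Finset.sum_le_sum_of_subset_of_nonneg hFN fun q _ _ => by
          have := avg_pos hw hwi q
          positivity
    _ = 2 * A * ∑ q ∈ dyadicTree N p, hc (fun x => (√(w x))⁻¹) q ^ 2 * avg w q :=
        (Finset.mul_sum _ _ _).symm
    _ ≤ 2 * A * (4 * A * dLen p) := by gcongr; exact hcarleson
    _ = 8 * A ^ 2 * dLen p := by ring
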